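/- arXiv:2403.07337 — 3 statements merged into one kernel-verified Lean document; each statement's English description precedes it below -/
import Mathlib

section
/- Let A, B, C be mutually independent ℕ-valued random variables on a probability space (Ω, ℙ) having Poisson distributions with means a > 0, b > 0, c > 0 respectively. Then ℙ[C + B = 0 and C + A ≥ 1] / ℙ[C + A ≥ 1] = e^{−(b+c)}(1 − e^{−a}) / (1 − e^{−(a+c)}). -/
open MeasureTheory ProbabilityTheory Real

/-!
Both events are described by which counts vanish: `{1 ≤ C + A}` is the complement of
`{A = 0} ∩ {C = 0}`, and `{C + B = 0 ∧ 1 ≤ C + A}` is `{A ≠ 0} ∩ {B = 0} ∩ {C = 0}`.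
Independence factorises their probabilities, and a Poisson count with mean `a` vanishes with
probability `e^{-a}`.
-/

namespace ProbabilityTheory

variable {Ω β : Type*} [MeasurableSpace Ω] [MeasurableSpace β] {μ : Measure Ω}

theorem iIndepFun.measure_inter_preimage_three {X Y Z : Ω → β} (h : iIndepFun ![X, Y, Z] μ)
    {s t u : Set β} (hs : MeasurableSet s) (ht : MeasurableSet t) (hu : MeasurableSet u) :
    μ (X ⁻¹' s ∩ Y ⁻¹' t ∩ Z ⁻¹' u) = μ (X ⁻¹' s) * μ (Y ⁻¹' t) * μ (Z ⁻¹' u) := by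
  have hmul := h.measure_inter_preimage_eq_mul Finset.univ (sets := ![s, t, u])
    (fun i _ => by fin_cases i <;> assumption)
  have hinter :
      ⋂ i ∈ Finset.univ, ![X, Y, Z] i ⁻¹' ![s, t, u] i = X ⁻¹' s ∩ Y ⁻¹' t ∩ Z ⁻¹' u := by
    ext ω
    simp [Fin.forall_fin_succ, and_assoc]
  rw [hinter, Fin.prod_univ_three] at hmul
  simpa using hmul

end ProbabilityTheory

section PoissonCounts

variable {Ω : Type*} [MeasurableSpace Ω] {μ : Measure Ω}

theorem measure_preimage_zero_of_poisson {X : Ω → ℕ} {a : ℝ}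
    (hX : ∀ n : ℕ, μ {ω | X ω = n} = ENNReal.ofReal (Real.exp (-a) * a ^ n / n.factorial)) :
    μ (X ⁻¹' {0}) = ENNReal.ofReal (Real.exp (-a)) := by
  simpa [Set.preimage] using hX 0

variable [IsProbabilityMeasure μ] {A B C : Ω → ℕ}

theorem measure_one_le_add_eq_one_sub_mul (hAm : Measurable A) (hCm : Measurable C)
    (h : IndepFun A C μ) :
    μ {ω | 1 ≤ C ω + A ω} = 1 - μ (A ⁻¹' {0}) * μ (C ⁻¹' {0}) := by
  have hset : {ω | 1 ≤ C ω + A ω} = (A ⁻¹' {0} ∩ C ⁻¹' {0})ᶜ := by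
    ext ω
    simp [Nat.one_le_iff_ne_zero, and_comm]
  rw [hset, prob_compl_eq_one_sub ((hAm (measurableSet_singleton 0)).inter
    (hCm (measurableSet_singleton 0))), h.measure_inter_preimage_eq_mul _ _
    (measurableSet_singleton 0) (measurableSet_singleton 0)]

theorem measure_add_eq_zero_and_one_le_add_eq (hAm : Measurable A) (h : iIndepFun ![A, B, C] μ) :
    μ {ω | C ω + B ω = 0 ∧ 1 ≤ C ω + A ω} =
      (1 - μ (A ⁻¹' {0})) * μ (B ⁻¹' {0}) * μ (C ⁻¹' {0}) := by
  have hset : {ω | C ω + B ω = 0 ∧ 1 ≤ C ω + A ω} = A ⁻¹' {0}ᶜ ∩ B ⁻¹' {0} ∩ C ⁻¹' {0} := by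
    ext ω
    simp only [Set.mem_ofPred_eq, Set.mem_inter_iff, Set.mem_preimage, Set.mem_compl_iff,
      Set.mem_singleton_iff, Nat.add_eq_zero_iff, Nat.one_le_iff_ne_zero]
    omega
  rw [hset, h.measure_inter_preimage_three (measurableSet_singleton 0).compl
    (measurableSet_singleton 0) (measurableSet_singleton 0), Set.preimage_compl,
    prob_compl_eq_one_sub (hAm (measurableSet_singleton 0))]

end PoissonCounts

theorem poisson_nlos_to_los_transition_general
    {Ω : Type*} [MeasurableSpace Ω] (μ : Measure Ω) [IsProbabilityMeasure μ]
    (A B C : Ω → ℕ) (hAm : Measurable A) (hCm : Measurable C)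
    (a b c : ℝ) (ha : 0 < a) (hc : 0 < c)
    (hA : ∀ n : ℕ, μ {ω | A ω = n} =
      ENNReal.ofReal (Real.exp (-a) * a ^ n / n.factorial))
    (hB : ∀ n : ℕ, μ {ω | B ω = n} =
      ENNReal.ofReal (Real.exp (-b) * b ^ n / n.factorial))
    (hC : ∀ n : ℕ, μ {ω | C ω = n} =
      ENNReal.ofReal (Real.exp (-c) * c ^ n / n.factorial))
    (hindep : iIndepFun ![A, B, C] μ) :
    μ {ω | C ω + B ω = 0 ∧ 1 ≤ C ω + A ω} / μ {ω | 1 ≤ C ω + A ω} =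
      ENNReal.ofReal (Real.exp (-(b + c)) * (1 - Real.exp (-a)) / (1 - Real.exp (-(a + c)))) := by
  have hAC : IndepFun A C μ := by simpa using hindep.indepFun (i := 0) (j := 2) (by decide)
  have hden_pos : 0 < 1 - Real.exp (-(a + c)) := by
    simpa using Real.exp_lt_one_iff.mpr (by linarith : -(a + c) < 0)
  have hnum : (1 - ENNReal.ofReal (Real.exp (-a))) * ENNReal.ofReal (Real.exp (-b)) *
      ENNReal.ofReal (Real.exp (-c)) =
        ENNReal.ofReal (Real.exp (-(b + c)) * (1 - Real.exp (-a))) := by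
    rw [← ENNReal.ofReal_one, ← ENNReal.ofReal_sub _ (Real.exp_nonneg _), mul_assoc, mul_comm,
      ← ENNReal.ofReal_mul (Real.exp_nonneg _), ← Real.exp_add,
      ← ENNReal.ofReal_mul (Real.exp_nonneg _), neg_add, add_comm]
  have hden : 1 - ENNReal.ofReal (Real.exp (-a)) * ENNReal.ofReal (Real.exp (-c)) =
      ENNReal.ofReal (1 - Real.exp (-(a + c))) := by
    rw [← ENNReal.ofReal_mul (Real.exp_nonneg _), ← Real.exp_add, ← ENNReal.ofReal_one,
      ← ENNReal.ofReal_sub _ (Real.exp_nonneg _), neg_add]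
  rw [measure_add_eq_zero_and_one_le_add_eq hAm hindep,
    measure_one_le_add_eq_one_sub_mul hAm hCm hAC,
    measure_preimage_zero_of_poisson hA, measure_preimage_zero_of_poisson hB,
    measure_preimage_zero_of_poisson hC, hnum, hden, ENNReal.ofReal_div_of_pos hden_pos]

/-- For mutually independent Poisson random variables `A`, `B`, `C` with means
`a`, `b`, `c`, `ℙ[C + B = 0 ∧ C + A ≥ 1] / ℙ[C + A ≥ 1]
  = e^{-(b+c)}(1 - e^{-a}) / (1 - e^{-(a+c)})`. -/
theorem poisson_nlos_to_los_transition
    {Ω : Type*} [MeasurableSpace Ω] (μ : Measure Ω) [IsProbabilityMeasure μ]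
    (A B C : Ω → ℕ) (hAm : Measurable A) (hBm : Measurable B) (hCm : Measurable C)
    (a b c : ℝ) (ha : 0 < a) (hb : 0 < b) (hc : 0 < c)
    (hA : ∀ n : ℕ, μ {ω | A ω = n} =
      ENNReal.ofReal (Real.exp (-a) * a ^ n / n.factorial))
    (hB : ∀ n : ℕ, μ {ω | B ω = n} =
      ENNReal.ofReal (Real.exp (-b) * b ^ n / n.factorial))
    (hC : ∀ n : ℕ, μ {ω | C ω = n} =
      ENNReal.ofReal (Real.exp (-c) * c ^ n / n.factorial))
    (hindep : iIndepFun ![A, B, C] μ) :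
    μ {ω | C ω + B ω = 0 ∧ 1 ≤ C ω + A ω} / μ {ω | 1 ≤ C ω + A ω} =
      ENNReal.ofReal (Real.exp (-(b + c)) * (1 - Real.exp (-a)) / (1 - Real.exp (-(a + c)))) :=
  poisson_nlos_to_los_transition_general μ A B C hAm hCm a b c ha hc hA hB hC hindep
end

section
/- Let m > 0, N ≥ 1, and let h₁,…,h_N, h'₁,…,h'_N be 2N mutually independent random variables on a probability space, each distributed according to the Gamma distribution with shape m and rate m. Then the reflecting gain G_bf := 𝔼[(∑_{n=1}^{N} √(h_n)·√(h'_n))²] equals N + N(N−1)·Γ(m + 1/2)⁴/(m²·Γ(m)⁴). -/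
/-! With `Z n = √(h n) √(h' n)`, the `Z n` are pairwise independent, so the variance of their
sum is additive and `𝔼[(∑ Z n)²] = N 𝔼[Z²] + N (N - 1) 𝔼[Z]²`. Independence of `h n` and `h' n`
gives `𝔼[Z] = 𝔼[√h]²` and `𝔼[Z²] = 𝔼[h]² = 1`, and the Gamma moments
`𝔼[X ^ p] = Γ(a + p) / (r ^ p Γ(a))` give `𝔼[√h] = Γ(m + 1/2) / (√m Γ(m))`. -/

open MeasureTheory ProbabilityTheory Real Set

namespace ProbabilityTheory

variable {Ω : Type*} [MeasurableSpace Ω] {μ : Measure Ω}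

open Finset in
lemma integral_sq_sum_of_pairwise_indepFun [IsProbabilityMeasure μ] {ι : Type*} {s : Finset ι}
    {Z : ι → Ω → ℝ} (hZ : ∀ i ∈ s, MemLp (Z i) 2 μ)
    (hindep : Set.Pairwise s fun i j => IndepFun (Z i) (Z j) μ) {m₁ m₂ : ℝ}
    (h₁ : ∀ i ∈ s, ∫ ω, Z i ω ∂μ = m₁) (h₂ : ∀ i ∈ s, ∫ ω, Z i ω ^ 2 ∂μ = m₂) :
    ∫ ω, (∑ i ∈ s, Z i ω) ^ 2 ∂μ = #s * m₂ + #s * (#s - 1) * m₁ ^ 2 := by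
  have hmean : ∫ ω, ∑ i ∈ s, Z i ω ∂μ = #s * m₁ := by
    rw [integral_finsetSum s fun i hi => (hZ i hi).integrable one_le_two, sum_congr rfl h₁,
      sum_const, nsmul_eq_mul]
  have hvar_i : ∀ i ∈ s, Var[Z i; μ] = m₂ - m₁ ^ 2 := fun i hi => by
    simp only [variance_eq_sub (hZ i hi), Pi.pow_apply, h₁ i hi, h₂ i hi]
  have hvar : Var[∑ i ∈ s, Z i; μ] = #s * (m₂ - m₁ ^ 2) := by
    rw [IndepFun.variance_sum hZ hindep, sum_congr rfl hvar_i, sum_const, nsmul_eq_mul]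
  simp only [variance_eq_sub (memLp_finsetSum' s hZ), Pi.pow_apply, Finset.sum_apply, hmean] at hvar
  linear_combination hvar

variable {a r : ℝ}

lemma gammaMeasure_Iio_zero : gammaMeasure a r (Iio 0) = 0 := by
  rw [gammaMeasure, withDensity_apply _ measurableSet_Iio]
  exact lintegral_gammaPDF_of_nonpos le_rfl

lemma ae_nonneg_gammaMeasure : ∀ᵐ x ∂gammaMeasure a r, 0 ≤ x :=
  ae_iff.2 <| by simp only [not_le]; exact gammaMeasure_Iio_zero

lemma measurable_gammaPDF (a r : ℝ) : Measurable (gammaPDF a r) :=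
  (measurable_gammaPDFReal a r).ennreal_ofReal

lemma integral_gammaMeasure (ha : 0 < a) (hr : 0 < r) (g : ℝ → ℝ) :
    ∫ x, g x ∂gammaMeasure a r = ∫ x, gammaPDFReal a r x * g x := by
  rw [gammaMeasure, integral_withDensity_eq_integral_toReal_smul
    (measurable_gammaPDF a r) (ae_of_all _ fun _ => ENNReal.ofReal_lt_top)]
  simp only [gammaPDF, ENNReal.toReal_ofReal (gammaPDFReal_nonneg ha hr _), smul_eq_mul]

lemma integrable_gammaMeasure_iff (ha : 0 < a) (hr : 0 < r) {g : ℝ → ℝ} :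
    Integrable g (gammaMeasure a r) ↔ Integrable fun x => gammaPDFReal a r x * g x := by
  rw [gammaMeasure, integrable_withDensity_iff_integrable_smul'
    (measurable_gammaPDF a r) (ae_of_all _ fun _ => ENNReal.ofReal_lt_top)]
  simp only [gammaPDF, ENNReal.toReal_ofReal (gammaPDFReal_nonneg ha hr _), smul_eq_mul]

-- Only a.e.: at `x = 0` the two sides can differ, through the convention `0 ^ 0 = 1`.
lemma gammaPDFReal_mul_rpow_ae_eq (p : ℝ) :
    (fun x => gammaPDFReal a r x * x ^ p) =ᵐ[volume]
      (Ioi 0).indicator fun x => r ^ a / Gamma a * (x ^ (a + p - 1) * exp (-(r * x))) := by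
  filter_upwards [Measure.ae_ne volume 0] with x hx
  rcases hx.lt_or_gt with hneg | hpos
  · simp [gammaPDFReal, hneg.not_ge, hneg.not_gt]
  · rw [indicator_of_mem (mem_Ioi.2 hpos), gammaPDFReal, if_pos hpos.le,
      show a + p - 1 = a - 1 + p by ring, rpow_add hpos]
    ring

lemma integrable_rpow_gammaMeasure (ha : 0 < a) (hr : 0 < r) {p : ℝ} (hp : 0 < a + p) :
    Integrable (fun x => x ^ p) (gammaMeasure a r) := by
  rw [integrable_gammaMeasure_iff ha hr, integrable_congr (gammaPDFReal_mul_rpow_ae_eq p),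
    integrable_indicator_iff measurableSet_Ioi]
  have := integrableOn_rpow_mul_exp_neg_mul_rpow (s := a + p - 1) (by linarith) one_pos hr
  simp only [rpow_one, neg_mul] at this
  exact this.const_mul _

lemma integral_rpow_gammaMeasure (ha : 0 < a) (hr : 0 < r) {p : ℝ} (hp : 0 < a + p) :
    ∫ x, x ^ p ∂gammaMeasure a r = Gamma (a + p) / (r ^ p * Gamma a) := by
  rw [integral_gammaMeasure ha hr, integral_congr_ae (gammaPDFReal_mul_rpow_ae_eq p),
    integral_indicator measurableSet_Ioi, integral_const_mul,
    show a + p - 1 = (a + p) - 1 by ring, integral_rpow_mul_exp_neg_mul_Ioi hp hr,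
    one_div, inv_rpow hr.le, rpow_add hr]
  have := Gamma_pos_of_pos ha
  field_simp

variable {X : Ω → ℝ}

-- `μ.map X = 0` unless `X` is a.e.-measurable.
lemma aemeasurable_of_map_eq_gammaMeasure (ha : 0 < a) (hr : 0 < r)
    (hX : μ.map X = gammaMeasure a r) : AEMeasurable X μ := by
  have := isProbabilityMeasure_gammaMeasure ha hr
  exact .of_map_ne_zero <| hX ▸ IsProbabilityMeasure.ne_zero _

lemma ae_nonneg_of_map_eq_gammaMeasure (ha : 0 < a) (hr : 0 < r)
    (hX : μ.map X = gammaMeasure a r) : ∀ᵐ ω ∂μ, 0 ≤ X ω :=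
  ae_of_ae_map (aemeasurable_of_map_eq_gammaMeasure ha hr hX) (hX ▸ ae_nonneg_gammaMeasure)

lemma integrable_rpow_of_map_eq_gammaMeasure (ha : 0 < a) (hr : 0 < r)
    (hX : μ.map X = gammaMeasure a r) {p : ℝ} (hp : 0 < a + p) :
    Integrable (fun ω => X ω ^ p) μ :=
  (hX ▸ integrable_rpow_gammaMeasure ha hr hp).comp_aemeasurable
    (aemeasurable_of_map_eq_gammaMeasure ha hr hX)

lemma integral_rpow_of_map_eq_gammaMeasure (ha : 0 < a) (hr : 0 < r)
    (hX : μ.map X = gammaMeasure a r) {p : ℝ} (hp : 0 < a + p) :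
    ∫ ω, X ω ^ p ∂μ = Gamma (a + p) / (r ^ p * Gamma a) := by
  rw [← integral_map (f := fun x => x ^ p) (aemeasurable_of_map_eq_gammaMeasure ha hr hX)
      (by fun_prop), hX,
    integral_rpow_gammaMeasure ha hr hp]

lemma integrable_of_map_eq_gammaMeasure (ha : 0 < a) (hr : 0 < r)
    (hX : μ.map X = gammaMeasure a r) : Integrable X μ := by
  simpa using integrable_rpow_of_map_eq_gammaMeasure ha hr hX (p := 1) (by linarith)

lemma integral_of_map_eq_gammaMeasure (ha : 0 < a) (hr : 0 < r)
    (hX : μ.map X = gammaMeasure a r) : ∫ ω, X ω ∂μ = a / r := by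
  have := integral_rpow_of_map_eq_gammaMeasure ha hr hX (p := 1) (by linarith)
  simp only [rpow_one, Gamma_add_one ha.ne'] at this
  rw [this]
  have := Gamma_pos_of_pos ha
  field_simp

lemma integral_sqrt_of_map_eq_gammaMeasure (ha : 0 < a) (hr : 0 < r)
    (hX : μ.map X = gammaMeasure a r) :
    ∫ ω, √(X ω) ∂μ = Gamma (a + 1 / 2) / (√r * Gamma a) := by
  simp only [sqrt_eq_rpow]
  exact integral_rpow_of_map_eq_gammaMeasure ha hr hX (by linarith)

variable {Y : Ω → ℝ}

lemma sq_sqrt_mul_sqrt_ae_eq_of_map_eq_gammaMeasure (ha : 0 < a) (hr : 0 < r)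
    (hX : μ.map X = gammaMeasure a r) (hY : μ.map Y = gammaMeasure a r) :
    (fun ω => (√(X ω) * √(Y ω)) ^ 2) =ᵐ[μ] X * Y := by
  filter_upwards [ae_nonneg_of_map_eq_gammaMeasure ha hr hX,
    ae_nonneg_of_map_eq_gammaMeasure ha hr hY] with ω hXω hYω
  simp only [mul_pow, sq_sqrt hXω, sq_sqrt hYω, Pi.mul_apply]

lemma integral_sqrt_mul_sqrt_of_indepFun (ha : 0 < a) (hr : 0 < r)
    (hX : μ.map X = gammaMeasure a r) (hY : μ.map Y = gammaMeasure a r) (hXY : IndepFun X Y μ) :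
    ∫ ω, √(X ω) * √(Y ω) ∂μ = (Gamma (a + 1 / 2) / (√r * Gamma a)) ^ 2 := by
  have hXY' : IndepFun (fun ω => √(X ω)) (fun ω => √(Y ω)) μ :=
    hXY.comp continuous_sqrt.measurable continuous_sqrt.measurable
  rw [hXY'.integral_fun_mul_eq_mul_integral
    (aemeasurable_of_map_eq_gammaMeasure ha hr hX).sqrt.aestronglyMeasurable
    (aemeasurable_of_map_eq_gammaMeasure ha hr hY).sqrt.aestronglyMeasurable,
    integral_sqrt_of_map_eq_gammaMeasure ha hr hX, integral_sqrt_of_map_eq_gammaMeasure ha hr hY,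
    sq]

lemma integral_sq_sqrt_mul_sqrt_of_indepFun (ha : 0 < a) (hr : 0 < r)
    (hX : μ.map X = gammaMeasure a r) (hY : μ.map Y = gammaMeasure a r) (hXY : IndepFun X Y μ) :
    ∫ ω, (√(X ω) * √(Y ω)) ^ 2 ∂μ = (a / r) ^ 2 := by
  rw [integral_congr_ae (sq_sqrt_mul_sqrt_ae_eq_of_map_eq_gammaMeasure ha hr hX hY),
    hXY.integral_mul_eq_mul_integral
      (aemeasurable_of_map_eq_gammaMeasure ha hr hX).aestronglyMeasurable
      (aemeasurable_of_map_eq_gammaMeasure ha hr hY).aestronglyMeasurable,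
    integral_of_map_eq_gammaMeasure ha hr hX, integral_of_map_eq_gammaMeasure ha hr hY, sq]

lemma memLp_sqrt_mul_sqrt_of_indepFun (ha : 0 < a) (hr : 0 < r)
    (hX : μ.map X = gammaMeasure a r) (hY : μ.map Y = gammaMeasure a r) (hXY : IndepFun X Y μ) :
    MemLp (fun ω => √(X ω) * √(Y ω)) 2 μ := by
  refine (memLp_two_iff_integrable_sq ?_).2 <|
    (hXY.integrable_mul (integrable_of_map_eq_gammaMeasure ha hr hX)
      (integrable_of_map_eq_gammaMeasure ha hr hY)).congr
      (sq_sqrt_mul_sqrt_ae_eq_of_map_eq_gammaMeasure ha hr hX hY).symm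
  exact ((aemeasurable_of_map_eq_gammaMeasure ha hr hX).sqrt.mul
    (aemeasurable_of_map_eq_gammaMeasure ha hr hY).sqrt).aestronglyMeasurable

lemma iIndepFun.indepFun_comp_mul_comp_sumElim {ι : Type*} {X Y : ι → Ω → ℝ}
    (hXY : iIndepFun (Sum.elim X Y) μ) (hX : ∀ i, AEMeasurable (X i) μ)
    (hY : ∀ i, AEMeasurable (Y i) μ) {φ : ℝ → ℝ} (hφ : Measurable φ) {i j : ι} (hij : i ≠ j) :
    IndepFun (fun ω => φ (X i ω) * φ (Y i ω)) (fun ω => φ (X j ω) * φ (Y j ω)) μ := by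
  have hmeas : ∀ k, AEMeasurable (φ ∘ Sum.elim X Y k) μ := by
    rintro (k | k)
    exacts [hφ.comp_aemeasurable (hX k), hφ.comp_aemeasurable (hY k)]
  exact (hXY.comp (fun _ => φ) fun _ => hφ).indepFun_mul_mul₀ hmeas (.inl i) (.inr i) (.inl j)
    (.inr j) (by simpa) (by simp) (by simp) (by simpa)

end ProbabilityTheory

theorem reflecting_gain_nakagami_general
    {Ω : Type*} [MeasurableSpace Ω] (μ : Measure Ω) [IsProbabilityMeasure μ]
    (m : ℝ) (hm : 0 < m) (N : ℕ)
    (h h' : Fin N → Ω → ℝ)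
    (hdist : ∀ n, Measure.map (h n) μ = gammaMeasure m m)
    (hdist' : ∀ n, Measure.map (h' n) μ = gammaMeasure m m)
    (hindep : iIndepFun (Sum.elim h h') μ) :
    (∫ ω, (∑ n, Real.sqrt (h n ω) * Real.sqrt (h' n ω)) ^ 2 ∂μ) =
      N + N * (N - 1) * Real.Gamma (m + 1 / 2) ^ 4 / (m ^ 2 * Real.Gamma m ^ 4) := by
  have hpair (n : Fin N) : IndepFun (h n) (h' n) μ := hindep.indepFun Sum.inl_ne_inr
  have hmeas (n : Fin N) := aemeasurable_of_map_eq_gammaMeasure hm hm (hdist n)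
  have hmeas' (n : Fin N) := aemeasurable_of_map_eq_gammaMeasure hm hm (hdist' n)
  rw [integral_sq_sum_of_pairwise_indepFun
    (fun n _ => memLp_sqrt_mul_sqrt_of_indepFun hm hm (hdist n) (hdist' n) (hpair n))
    (fun n _ k _ hnk =>
      hindep.indepFun_comp_mul_comp_sumElim hmeas hmeas' continuous_sqrt.measurable hnk)
    (fun n _ => integral_sqrt_mul_sqrt_of_indepFun hm hm (hdist n) (hdist' n) (hpair n))
    (fun n _ => integral_sq_sqrt_mul_sqrt_of_indepFun hm hm (hdist n) (hdist' n) (hpair n)),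
    Finset.card_univ, Fintype.card_fin, div_self hm.ne', ← pow_mul, div_pow, mul_pow,
    show √m ^ (2 * 2) = m ^ 2 by rw [pow_mul, sq_sqrt hm.le]]
  ring

/-- The IRS reflecting gain under Nakagami-m fading: if `h₁,…,h_N, h'₁,…,h'_N` are
mutually independent Gamma(m, m) random variables, then
`𝔼[(∑ n, √(h n)·√(h' n))²] = N + N(N−1)·Γ(m + 1/2)⁴ / (m²·Γ(m)⁴)`. -/
theorem reflecting_gain_nakagami
    {Ω : Type*} [MeasurableSpace Ω] (μ : Measure Ω) [IsProbabilityMeasure μ]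
    (m : ℝ) (hm : 0 < m) (N : ℕ) (hN : 1 ≤ N)
    (h h' : Fin N → Ω → ℝ)
    (hmeas : ∀ n, Measurable (h n)) (hmeas' : ∀ n, Measurable (h' n))
    (hdist : ∀ n, Measure.map (h n) μ = gammaMeasure m m)
    (hdist' : ∀ n, Measure.map (h' n) μ = gammaMeasure m m)
    (hindep : iIndepFun (Sum.elim h h') μ) :
    (∫ ω, (∑ n, Real.sqrt (h n ω) * Real.sqrt (h' n ω)) ^ 2 ∂μ) =
      N + N * (N - 1) * Real.Gamma (m + 1 / 2) ^ 4 / (m ^ 2 * Real.Gamma m ^ 4) :=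
  reflecting_gain_nakagami_general μ m hm N h h' hdist hdist' hindep
end

section
/- Let λ_o > 0, ℓ > 0, d ≥ 0, λ_i > 0, and set c = 2·λ_o·ℓ/π. For D ≥ ℓ define q(D) = (1/2)·[ (ℓ/c + 1/c²)·e^{−c(ℓ+d)} − (D/c + 1/c²)·e^{−c(D+d)} ] and P(D) = 1 − exp(−λ_i·q(D)). Then P is strictly increasing on [ℓ, ∞) and P(D) → 1 − exp(−(λ_i/2)·(ℓ/c + 1/c²)·e^{−c(ℓ+d)}) as D → ∞; in particular P is bounded above by this finite limit, which is strictly less than 1. -/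
open Real Filter

/-!
With `g x = (x/c + 1/c²)·e^{-c(x+d)} = ∫_x^∞ t·e^{-c(t+d)} dt`, the function `q` is `(g ℓ - g D)/2`.
Since `g' x = -x·e^{-c(x+d)} < 0` for `x > 0`, `q` is strictly increasing on `[ℓ, ∞)`, and since
`g ≥ 0` with `g x → 0`, `q` increases to `g ℓ / 2`. Composing with the increasing continuous map
`y ↦ 1 - e^{-λ_i y}` transfers all of this to `P`.
-/

noncomputable def weightedExpTail (c d x : ℝ) : ℝ :=
  (x / c + 1 / c ^ 2) * exp (-(c * (x + d)))

section weightedExpTail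

variable {c : ℝ} (d : ℝ)

theorem hasDerivAt_weightedExpTail (hc : c ≠ 0) (x : ℝ) :
    HasDerivAt (weightedExpTail c d) (-(x * exp (-(c * (x + d))))) x := by
  have hlin : HasDerivAt (fun y => y / c + 1 / c ^ 2) (1 / c) x :=
    ((hasDerivAt_id x).div_const c).add_const _
  have hexp : HasDerivAt (fun y => exp (-(c * (y + d)))) (exp (-(c * (x + d))) * -(c * 1)) x :=
    (((hasDerivAt_id x).add_const d).const_mul c).neg.exp
  refine (hlin.mul hexp).congr_deriv ?_
  field_simp
  ring

theorem strictAntiOn_weightedExpTail (hc : c ≠ 0) :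
    StrictAntiOn (weightedExpTail c d) (Set.Ici 0) := by
  refine strictAntiOn_of_deriv_neg (convex_Ici 0)
    (fun x _ => (hasDerivAt_weightedExpTail d hc x).continuousAt.continuousWithinAt) ?_
  intro x hx
  rw [interior_Ici, Set.mem_Ioi] at hx
  rw [(hasDerivAt_weightedExpTail d hc x).deriv, neg_lt_zero]
  positivity

theorem weightedExpTail_pos (hc : 0 < c) {x : ℝ} (hx : 0 ≤ x) : 0 < weightedExpTail c d x := by
  unfold weightedExpTail
  positivity

theorem tendsto_weightedExpTail_atTop (hc : 0 < c) :
    Tendsto (weightedExpTail c d) atTop (nhds 0) := by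
  have hcx : Tendsto (fun x => c * x) atTop atTop := tendsto_id.const_mul_atTop hc
  have hmul : Tendsto (fun x => c * x * exp (-(c * x))) atTop (nhds 0) := by
    simpa [Function.comp_def] using (tendsto_pow_mul_exp_neg_atTop_nhds_zero 1).comp hcx
  have hexp : Tendsto (fun x => exp (-(c * x))) atTop (nhds 0) :=
    tendsto_exp_atBot.comp (tendsto_neg_atTop_atBot.comp hcx)
  have hsum := (hmul.add hexp).mul_const (exp (-(c * d)) / c ^ 2)
  rw [zero_add, zero_mul] at hsum
  refine hsum.congr fun x => ?_
  rw [weightedExpTail, show -(c * (x + d)) = -(c * x) + -(c * d) by ring, exp_add]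
  field_simp

end weightedExpTail

theorem strictMono_one_sub_exp_neg_mul {k : ℝ} (hk : 0 < k) :
    StrictMono fun y => 1 - exp (-(k * y)) := fun _ _ hxy =>
  sub_lt_sub_left (exp_lt_exp.2 (neg_lt_neg (mul_lt_mul_of_pos_left hxy hk))) 1

theorem reconfiguration_prob_strictMono_tendsto_limit_general
    (lo ℓ d li c : ℝ) (q P : ℝ → ℝ)
    (hlo : 0 < lo) (hℓ : 0 < ℓ) (hli : 0 < li)
    (hc : c = 2 * lo * ℓ / π)
    (hq : ∀ D : ℝ, q D = (1 / 2) * ((ℓ / c + 1 / c ^ 2) * Real.exp (-(c * (ℓ + d)))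
      - (D / c + 1 / c ^ 2) * Real.exp (-(c * (D + d)))))
    (hP : ∀ D : ℝ, P D = 1 - Real.exp (-(li * q D))) :
    StrictMonoOn P (Set.Ici ℓ) ∧
    Tendsto P atTop
      (nhds (1 - Real.exp (-(li / 2 * ((ℓ / c + 1 / c ^ 2) * Real.exp (-(c * (ℓ + d)))))))) ∧
    (∀ D : ℝ, ℓ ≤ D →
      P D ≤ 1 - Real.exp (-(li / 2 * ((ℓ / c + 1 / c ^ 2) * Real.exp (-(c * (ℓ + d))))))) ∧
    1 - Real.exp (-(li / 2 * ((ℓ / c + 1 / c ^ 2) * Real.exp (-(c * (ℓ + d)))))) < 1 := by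
  have hc0 : 0 < c := hc ▸ by positivity
  set g := weightedExpTail c d
  set φ := fun y => 1 - exp (-(li / 2 * y)) with hφ
  have hφ_mono : StrictMono φ := strictMono_one_sub_exp_neg_mul (half_pos hli)
  have hPφ : P = φ ∘ fun D => g ℓ - g D := funext fun D => by
    rw [hP, hq, Function.comp_apply, hφ]
    unfold g weightedExpTail
    ring_nf
  have hgap : StrictMonoOn (fun D => g ℓ - g D) (Set.Ici ℓ) := fun x hx y hy hxy =>
    sub_lt_sub_left ((strictAntiOn_weightedExpTail d hc0.ne').mono (Set.Ici_subset_Ici.2 hℓ.le)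
      hx hy hxy) _
  subst hPφ
  refine ⟨hφ_mono.comp_strictMonoOn hgap, ?_, fun D hD => ?_, ?_⟩
  · have hφ_cont : Continuous φ := by fun_prop
    have hlim := (hφ_cont.tendsto (g ℓ - 0)).comp
      (tendsto_const_nhds.sub (tendsto_weightedExpTail_atTop d hc0))
    rwa [sub_zero] at hlim
  · exact hφ_mono.monotone (sub_le_self _ (weightedExpTail_pos d hc0 (hℓ.le.trans hD)).le)
  · exact sub_lt_self 1 (exp_pos _)

/-- Remark 1(iii): as a function of the IRS serving distance `D`, the reconfiguration
probability `P(D) = 1 − exp(−λ_i·q(D))` is strictly increasing on `[ℓ, ∞)`, tends to the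
finite limit `1 − exp(−(λ_i/2)·(ℓ/c + 1/c²)·e^{−c(ℓ+d)})` as `D → ∞`, is bounded above by
this limit, and the limit is strictly less than `1`. -/
theorem reconfiguration_prob_strictMono_tendsto_limit
    (lo ℓ d li c : ℝ) (q P : ℝ → ℝ)
    (hlo : 0 < lo) (hℓ : 0 < ℓ) (hd : 0 ≤ d) (hli : 0 < li)
    (hc : c = 2 * lo * ℓ / π)
    (hq : ∀ D : ℝ, q D = (1 / 2) * ((ℓ / c + 1 / c ^ 2) * Real.exp (-(c * (ℓ + d)))
      - (D / c + 1 / c ^ 2) * Real.exp (-(c * (D + d)))))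
    (hP : ∀ D : ℝ, P D = 1 - Real.exp (-(li * q D))) :
    StrictMonoOn P (Set.Ici ℓ) ∧
    Tendsto P atTop
      (nhds (1 - Real.exp (-(li / 2 * ((ℓ / c + 1 / c ^ 2) * Real.exp (-(c * (ℓ + d)))))))) ∧
    (∀ D : ℝ, ℓ ≤ D →
      P D ≤ 1 - Real.exp (-(li / 2 * ((ℓ / c + 1 / c ^ 2) * Real.exp (-(c * (ℓ + d))))))) ∧
    1 - Real.exp (-(li / 2 * ((ℓ / c + 1 / c ^ 2) * Real.exp (-(c * (ℓ + d)))))) < 1 :=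
  reconfiguration_prob_strictMono_tendsto_limit_general lo ℓ d li c q P hlo hℓ hli hc hq hP
end
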